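/- Let A₁, A₂ be rings, W an (A₁,A₂)-bimodule finitely generated and projective as a left A₁-module, A = A₁[W]A₂, and M = (P₁, φ, P₂) an A-module with P₁, P₂ projective over A₁, A₂ respectively. Then the sequence 0 → (W⊗_{A₂}P₂, 0, 0) → (P₁, 0, 0) ⊕ (W⊗_{A₂}P₂, id, P₂) → (P₁, φ, P₂) → 0, with the first map given by (−φ; id, 0) and the second by ((id φ), id), is a projective resolution of M over A. -/

import Mathlib

noncomputable section

variable (A₁ A₂ W : Type) [Ring A₁] [Ring A₂]
  [AddCommGroup W] [Module A₁ W] [Module A₂ᵐᵒᵖ W] [SMulCommClass A₁ A₂ᵐᵒᵖ W]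

/-- `W` as a left module over `A₁ × A₂` (via the first factor). -/
instance modLeft : Module (A₁ × A₂) W := Module.compHom W (RingHom.fst A₁ A₂)

/-- `W` as a right module over `A₁ × A₂` (via the second factor). -/
instance modRight : Module (A₁ × A₂)ᵐᵒᵖ W :=
  Module.compHom W (RingHom.op (RingHom.snd A₁ A₂))

instance commCls : SMulCommClass (A₁ × A₂) (A₁ × A₂)ᵐᵒᵖ W :=
  ⟨fun r s w => smul_comm r.1 (MulOpposite.op s.unop.2) w⟩

/-- The triangular matrix ring `A₁[W]A₂` of matrices `(a₁ w; 0 a₂)`, realized as the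
trivial square-zero extension of `A₁ × A₂` by the `(A₁,A₂)`-bimodule `W`. -/
abbrev TriRing := TrivSqZeroExt (A₁ × A₂) W

/-- The diagonal idempotent `e₁ = (1 0; 0 0)`. -/
def e1 : TriRing A₁ A₂ W := TrivSqZeroExt.inl ((1 : A₁), (0 : A₂))

/-- The diagonal idempotent `e₂ = (0 0; 0 1)`. -/
def e2 : TriRing A₁ A₂ W := TrivSqZeroExt.inl ((0 : A₁), (1 : A₂))

variable (P₂ : Type) [AddCommGroup P₂] [Module A₂ P₂]

/-- The defining relations of the tensor product `W ⊗_{A₂} P₂`. -/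
def wrel : Submodule ℤ (TensorProduct ℤ W P₂) :=
  Submodule.span ℤ {x | ∃ (a : A₂) (w : W) (p : P₂),
    x = (MulOpposite.op a • w) ⊗ₜ[ℤ] p - w ⊗ₜ[ℤ] (a • p)}

/-- The tensor product `W ⊗_{A₂} P₂` over the (possibly noncommutative) ring `A₂`. -/
abbrev WTensor := TensorProduct ℤ W P₂ ⧸ wrel A₂ W P₂

/-- The elementary tensor `w ⊗ p` in `W ⊗_{A₂} P₂`. -/
def wmk (w : W) (p : P₂) : WTensor A₂ W P₂ :=
  Submodule.Quotient.mk (w ⊗ₜ[ℤ] p)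

/-- Left multiplication by `a : A₁` on `W`, as a `ℤ`-linear map. -/
def smulW (a : A₁) : W →ₗ[ℤ] W where
  toFun := (a • ·)
  map_add' := smul_add a
  map_smul' z w := smul_comm a z w

/-- The left action of `a : A₁` on `W ⊗_{A₂} P₂` (through the left action on `W`). -/
def tau (a : A₁) : WTensor A₂ W P₂ →ₗ[ℤ] WTensor A₂ W P₂ :=
  Submodule.mapQ _ _ (LinearMap.rTensor P₂ (smulW A₁ W a)) (by
    rw [wrel, Submodule.span_le]
    rintro x ⟨b, w, p, rfl⟩
    have : (LinearMap.rTensor P₂ (smulW A₁ W a))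
        ((MulOpposite.op b • w) ⊗ₜ[ℤ] p - w ⊗ₜ[ℤ] (b • p))
        = (MulOpposite.op b • (a • w)) ⊗ₜ[ℤ] p - (a • w) ⊗ₜ[ℤ] (b • p) := by
      simp [smulW, smul_comm]
    rw [SetLike.mem_coe]
    show (LinearMap.rTensor P₂ (smulW A₁ W a))
        ((MulOpposite.op b • w) ⊗ₜ[ℤ] p - w ⊗ₜ[ℤ] (b • p)) ∈ Submodule.span ℤ
          {x | ∃ (a : A₂) (w : W) (p : P₂), x = (MulOpposite.op a • w) ⊗ₜ[ℤ] p - w ⊗ₜ[ℤ] (a • p)}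
    rw [this]
    exact Submodule.subset_span ⟨b, a • w, p, rfl⟩)

/-!
`A` acts on a module `(N, 0, 0)` through the projection `A → A₁`, and `A₁ ≅ A e₁` is a direct
summand of `A`; hence `(N, 0, 0)` is projective over `A` as soon as `N` is projective over `A₁`.
This applies to `N = P₁` and to `N = W ⊗_{A₂} P₂`, which is a direct summand of `W^(P₂)` once a
section `σ₂` splits `P₂` off `A₂^(P₂)`. The same section exhibits
`(W ⊗_{A₂} P₂, id, P₂) ≅ A e₂ ⊗_{A₂} P₂` as a direct summand of `A^(P₂)`. Exactness of the
sequence is a componentwise computation.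
-/

open TrivSqZeroExt MulOpposite

set_option linter.unusedSectionVars false

/-- The hypotheses on `ι` say that `S`, with `R` acting through `π`, is an `R`-module retract
of `R`. -/
theorem Module.Projective.of_ringHom_of_retract {R S M : Type*} [Semiring R] [Semiring S]
    [AddCommMonoid M] [Module R M] [Module S M] (π : R →+* S) (ι : S →+ R)
    (hπι : ∀ s, π (ι s) = s) (hι : ∀ r s, r * ι s = ι (π r * s))
    (hM : ∀ (r : R) (m : M), r • m = π r • m) [Module.Projective S M] :
    Module.Projective R M := by
  obtain ⟨σ, hσ⟩ := Module.projective_def'.mp ‹Module.Projective S M›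
  let σR : M →ₗ[R] M →₀ R :=
    { toFun m := (σ m).mapRange ι ι.map_zero
      map_add' m m' := by ext; simp
      map_smul' r m := by ext; simp [hM r m, hι] }
  refine .of_split σR (Finsupp.linearCombination R id) (LinearMap.ext fun m => ?_)
  have hm := LinearMap.congr_fun hσ m
  simp only [LinearMap.comp_apply, LinearMap.id_apply, Finsupp.linearCombination_apply] at hm ⊢
  show ((σ m).mapRange ι ι.map_zero).sum _ = m
  rw [Finsupp.sum_mapRange_index (by simp)]
  simpa [hM, hπι] using hm

section TriangularRing

variable {A₁ A₂ W}

local notation "𝔸" => TriRing A₁ A₂ W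

@[simp] theorem modLeft_smul (x : A₁ × A₂) (w : W) : x • w = x.1 • w := rfl

@[simp] theorem modRight_smul (x : A₁ × A₂) (w : W) : op x • w = op x.2 • w := rfl

theorem TriRing.smul_eq {N : Type*} [AddCommGroup N] [Module 𝔸 N] (a : 𝔸) (x : N) :
    a • x = (inl (a.fst.1, a.fst.2) : 𝔸) • x + (inr a.snd : 𝔸) • x := by
  rw [← add_smul, inl_fst_add_inr_snd_eq]

variable (A₁ A₂ W) in
def TriRing.inlFst : A₁ →+ 𝔸 := (inlHom (A₁ × A₂) W).toAddMonoidHom.comp (AddMonoidHom.inl A₁ A₂)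

variable (A₁ A₂ W) in
def TriRing.inlSnd : A₂ →+ 𝔸 := (inlHom (A₁ × A₂) W).toAddMonoidHom.comp (AddMonoidHom.inr A₁ A₂)

theorem TriRing.inlFst_apply (b : A₁) : TriRing.inlFst A₁ A₂ W b = inl (b, 0) := rfl

theorem TriRing.inlSnd_apply (b : A₂) : TriRing.inlSnd A₁ A₂ W b = inl (0, b) := rfl

theorem TriRing.mul_inlFst (a : 𝔸) (b : A₁) :
    a * TriRing.inlFst A₁ A₂ W b = TriRing.inlFst A₁ A₂ W (a.fst.1 * b) := by
  ext <;> simp [TriRing.inlFst_apply, Prod.mul_def]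

theorem TriRing.mul_inlSnd (a : 𝔸) (b : A₂) :
    a * TriRing.inlSnd A₁ A₂ W b = TriRing.inlSnd A₁ A₂ W (a.fst.2 * b) + inr (op b • a.snd) := by
  ext <;> simp [TriRing.inlSnd_apply, Prod.mul_def]

theorem TriRing.mul_inr (a : 𝔸) (w : W) : a * inr w = inr (a.fst.1 • w) := by
  ext <;> simp

variable (A₁ A₂ W) in
def TriRing.fstRingHom : 𝔸 →+* A₁ := (RingHom.fst A₁ A₂).comp (fstHom ℤ (A₁ × A₂) W).toRingHom

theorem TriRing.projective_of_smul_eq_fst {N : Type*} [AddCommGroup N] [Module A₁ N]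
    [Module 𝔸 N] (hN : ∀ (a : 𝔸) (x : N), a • x = a.fst.1 • x) [Module.Projective A₁ N] :
    Module.Projective 𝔸 N :=
  .of_ringHom_of_retract (TriRing.fstRingHom A₁ A₂ W) (TriRing.inlFst A₁ A₂ W) (fun _ => rfl)
    TriRing.mul_inlFst hN

end TriangularRing

section BalancedTensor

variable {A₂ W P₂}

theorem wmk_add_left (w w' : W) (p : P₂) :
    wmk A₂ W P₂ (w + w') p = wmk A₂ W P₂ w p + wmk A₂ W P₂ w' p := by
  simp [wmk, TensorProduct.add_tmul]

@[simp] theorem wmk_zero_left (p : P₂) : wmk A₂ W P₂ 0 p = 0 := by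
  simp [wmk]

@[simp] theorem wmk_zero_right (w : W) : wmk A₂ W P₂ w 0 = 0 := by
  simp [wmk]

theorem wmk_op_smul (a : A₂) (w : W) (p : P₂) :
    wmk A₂ W P₂ (op a • w) p = wmk A₂ W P₂ w (a • p) :=
  (Submodule.Quotient.eq _).mpr (Submodule.subset_span ⟨a, w, p, rfl⟩)

variable (A₂ W P₂) in
def wmkBilin : W →ₗ[ℤ] P₂ →ₗ[ℤ] WTensor A₂ W P₂ :=
  (TensorProduct.mk ℤ W P₂).compr₂ (wrel A₂ W P₂).mkQ

theorem wmkBilin_apply (w : W) (p : P₂) : wmkBilin A₂ W P₂ w p = wmk A₂ W P₂ w p :=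
  rfl

@[elab_as_elim]
theorem WTensor.induction_on {C : WTensor A₂ W P₂ → Prop} (x : WTensor A₂ W P₂)
    (zero : C 0) (wmk : ∀ w p, C (wmk A₂ W P₂ w p)) (add : ∀ x y, C x → C y → C (x + y)) :
    C x := by
  obtain ⟨t, rfl⟩ := Submodule.Quotient.mk_surjective _ x
  induction t using TensorProduct.induction_on with
  | zero => exact zero
  | tmul w p => exact wmk w p
  | add s t hs ht => exact add _ _ hs ht

def WTensor.lift {N : Type*} [AddCommGroup N] (f : W →ₗ[ℤ] P₂ →ₗ[ℤ] N)
    (hf : ∀ (a : A₂) w p, f (op a • w) p = f w (a • p)) : WTensor A₂ W P₂ →ₗ[ℤ] N :=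
  (wrel A₂ W P₂).liftQ (TensorProduct.lift f) <| Submodule.span_le.mpr <| by
    rintro _ ⟨a, w, p, rfl⟩
    change TensorProduct.lift f (_ - _) = 0
    simp [hf]

variable {A₁}

@[simp] theorem tau_wmk (a : A₁) (w : W) (p : P₂) :
    tau A₁ A₂ W P₂ a (wmk A₂ W P₂ w p) = wmk A₂ W P₂ (a • w) p :=
  rfl

variable (A₁ A₂ W P₂) in
abbrev tauModule : Module A₁ (WTensor A₂ W P₂) where
  smul a := tau A₁ A₂ W P₂ a
  one_smul x := show tau A₁ A₂ W P₂ 1 x = x by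
    induction x using WTensor.induction_on <;> simp_all
  mul_smul a b x := show tau A₁ A₂ W P₂ (a * b) x = tau A₁ A₂ W P₂ a (tau A₁ A₂ W P₂ b x) by
    induction x using WTensor.induction_on <;> simp_all [mul_smul]
  smul_zero a := map_zero _
  smul_add a := map_add _
  add_smul a b x :=
    show tau A₁ A₂ W P₂ (a + b) x = tau A₁ A₂ W P₂ a x + tau A₁ A₂ W P₂ b x by
    induction x using WTensor.induction_on <;>
      simp_all [add_smul, wmk_add_left, add_add_add_comm]
  zero_smul x := show tau A₁ A₂ W P₂ 0 x = 0 by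
    induction x using WTensor.induction_on <;> simp_all

end BalancedTensor

theorem Module.Projective.finsupp {R M ι : Type*} [Semiring R] [AddCommMonoid M] [Module R M]
    [Module.Projective R M] : Module.Projective R (ι →₀ M) := by
  classical
  exact .of_equiv (finsuppLequivDFinsupp R).symm

section Splitting

variable {A₁ A₂ W P₂}

attribute [local instance] tauModule

variable (A₁) in
def WTensor.ofFinsupp : (P₂ →₀ W) →ₗ[A₁] WTensor A₂ W P₂ :=
  Finsupp.lsum ℕ fun q =>
    { toFun w := wmk A₂ W P₂ w q
      map_add' w w' := wmk_add_left w w' q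
      map_smul' _ _ := rfl }

theorem WTensor.ofFinsupp_apply (f : P₂ →₀ W) :
    WTensor.ofFinsupp A₁ f = f.sum fun q w => wmk A₂ W P₂ w q :=
  rfl

variable (σ₂ : P₂ →ₗ[A₂] (P₂ →₀ A₂))

/-- `id_W ⊗ σ₂`, followed by `W ⊗_{A₂} A₂^(P₂) ≅ W^(P₂)`. -/
def WTensor.toFinsupp : WTensor A₂ W P₂ →ₗ[ℤ] (P₂ →₀ W) :=
  WTensor.lift
    (LinearMap.mk₂ ℤ (fun w p => (σ₂ p).mapRange (fun a => op a • w) (by simp))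
      (fun w w' p => by ext; simp [smul_add]) (fun z w p => by ext; simp [smul_comm _ z])
      (fun w p p' => by ext; simp [add_smul])
      (fun z w p => by ext; simp [mul_smul, Int.cast_smul_eq_zsmul, smul_comm _ z]))
    (fun a w p => by ext; simp [mul_smul])

theorem WTensor.toFinsupp_wmk (w : W) (p : P₂) :
    WTensor.toFinsupp σ₂ (wmk A₂ W P₂ w p) = (σ₂ p).mapRange (fun a => op a • w) (by simp) :=
  rfl

theorem WTensor.toFinsupp_tau (a : A₁) (x : WTensor A₂ W P₂) :
    WTensor.toFinsupp σ₂ (tau A₁ A₂ W P₂ a x) = a • WTensor.toFinsupp σ₂ x := by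
  induction x using WTensor.induction_on with
  | zero => simp
  | wmk w p => ext q; simp [WTensor.toFinsupp_wmk, smul_comm a]
  | add x y hx hy => simp [hx, hy]

theorem WTensor.ofFinsupp_toFinsupp (hσ₂ : Finsupp.linearCombination A₂ id ∘ₗ σ₂ = .id)
    (x : WTensor A₂ W P₂) : WTensor.ofFinsupp A₁ (WTensor.toFinsupp σ₂ x) = x := by
  induction x using WTensor.induction_on with
  | zero => simp
  | wmk w p =>
    have hp : (σ₂ p).sum (fun q a => a • q) = p := by
      simpa [Finsupp.linearCombination_apply] using LinearMap.congr_fun hσ₂ p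
    calc WTensor.ofFinsupp A₁ (WTensor.toFinsupp σ₂ (wmk A₂ W P₂ w p))
        _ = (σ₂ p).sum fun q a => wmkBilin A₂ W P₂ w (a • q) := by
          rw [WTensor.ofFinsupp_apply, WTensor.toFinsupp_wmk,
            Finsupp.sum_mapRange_index (by simp)]
          simp [wmk_op_smul, wmkBilin_apply]
        _ = wmk A₂ W P₂ w p := by rw [← map_finsuppSum, hp, wmkBilin_apply]
  | add x y hx hy => simp [hx, hy]

variable (A₁ W) in
theorem WTensor.projective [Module.Projective A₁ W] [Module.Projective A₂ P₂] :
    Module.Projective A₁ (WTensor A₂ W P₂) := by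
  obtain ⟨σ₂, hσ₂⟩ := Module.projective_def'.mp ‹Module.Projective A₂ P₂›
  have : Module.Projective A₁ (P₂ →₀ W) := .finsupp
  exact .of_split ⟨⟨WTensor.toFinsupp σ₂, map_add _⟩, WTensor.toFinsupp_tau σ₂⟩
    (WTensor.ofFinsupp A₁) (LinearMap.ext (WTensor.ofFinsupp_toFinsupp σ₂ hσ₂))

theorem WTensor.projective_triRing [Module (TriRing A₁ A₂ W) (WTensor A₂ W P₂)]
    (h : ∀ (a : TriRing A₁ A₂ W) x, a • x = tau A₁ A₂ W P₂ a.fst.1 x)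
    [Module.Projective A₁ W] [Module.Projective A₂ P₂] :
    Module.Projective (TriRing A₁ A₂ W) (WTensor A₂ W P₂) :=
  have : Module.Projective A₁ (WTensor A₂ W P₂) := WTensor.projective A₁ W
  TriRing.projective_of_smul_eq_fst h

theorem WTensor.projective_standard [Module (TriRing A₁ A₂ W) (WTensor A₂ W P₂ × P₂)]
    (h : ∀ (a : TriRing A₁ A₂ W) (m : WTensor A₂ W P₂ × P₂),
      a • m = (tau A₁ A₂ W P₂ a.fst.1 m.1 + wmk A₂ W P₂ a.snd m.2, a.fst.2 • m.2))
    [Module.Projective A₂ P₂] :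
    Module.Projective (TriRing A₁ A₂ W) (WTensor A₂ W P₂ × P₂) := by
  obtain ⟨σ₂, hσ₂⟩ := Module.projective_def'.mp ‹Module.Projective A₂ P₂›
  let ι : WTensor A₂ W P₂ × P₂ →ₗ[TriRing A₁ A₂ W] P₂ →₀ TriRing A₁ A₂ W :=
    { toFun m := (WTensor.toFinsupp σ₂ m.1).mapRange inr (inr_zero _)
        + (σ₂ m.2).mapRange (TriRing.inlSnd A₁ A₂ W) (map_zero _)
      map_add' m m' := by
        refine Finsupp.ext fun q => ?_
        simp only [Prod.fst_add, Prod.snd_add, map_add, Finsupp.add_apply, Finsupp.mapRange_apply,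
          inr_add]
        abel
      map_smul' a m := by
        refine Finsupp.ext fun q => ?_
        simp only [h, map_add, WTensor.toFinsupp_tau, WTensor.toFinsupp_wmk, map_smul,
          Finsupp.add_apply, Finsupp.mapRange_apply, Finsupp.smul_apply, RingHom.id_apply,
          smul_eq_mul, mul_add, inr_add, TriRing.mul_inr, TriRing.mul_inlSnd]
        abel }
  let π := Finsupp.linearCombination (TriRing A₁ A₂ W) fun q : P₂ => ((0 : WTensor A₂ W P₂), q)
  have hπ_inr (f : P₂ →₀ W) : π (f.mapRange inr (inr_zero _)) = (WTensor.ofFinsupp A₁ f, 0) := by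
    rw [Finsupp.linearCombination_apply, Finsupp.sum_mapRange_index (by simp)]
    simp [h, WTensor.ofFinsupp_apply, Finsupp.sum, Prod.ext_iff, Prod.fst_sum, Prod.snd_sum]
  have hπ_inl (f : P₂ →₀ A₂) : π (f.mapRange (TriRing.inlSnd A₁ A₂ W) (map_zero _))
      = (0, Finsupp.linearCombination A₂ id f) := by
    rw [Finsupp.linearCombination_apply, Finsupp.sum_mapRange_index (by simp),
      Finsupp.linearCombination_apply]
    simp [h, TriRing.inlSnd_apply, Finsupp.sum, Prod.ext_iff, Prod.fst_sum, Prod.snd_sum]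
  refine .of_split ι π (LinearMap.ext fun m => ?_)
  calc π (ι m)
      _ = (WTensor.ofFinsupp A₁ (WTensor.toFinsupp σ₂ m.1), 0)
          + (0, Finsupp.linearCombination A₂ id (σ₂ m.2)) := by
        rw [← hπ_inr, ← hπ_inl, ← map_add]; rfl
      _ = m := by
        rw [WTensor.ofFinsupp_toFinsupp σ₂ hσ₂, ← LinearMap.comp_apply, hσ₂]
        simp

end Splitting

theorem stmt3
    (hWproj : Module.Projective A₁ W)
    (P₁ : Type) [AddCommGroup P₁] [Module A₁ P₁]
    (hP₁ : Module.Projective A₁ P₁) (hP₂ : Module.Projective A₂ P₂)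
    (φ : WTensor A₂ W P₂ →ₗ[ℤ] P₁)
    (hφ : ∀ (a : A₁) (x : WTensor A₂ W P₂), φ (tau A₁ A₂ W P₂ a x) = a • φ x)
    -- the `A`-module `M = (P₁, φ, P₂)`
    [Module (TriRing A₁ A₂ W) (P₁ × P₂)]
    (hinl : ∀ (a₁ : A₁) (a₂ : A₂) (p₁ : P₁) (p₂ : P₂),
      (TrivSqZeroExt.inl (a₁, a₂) : TriRing A₁ A₂ W) • ((p₁, p₂) : P₁ × P₂)
        = (a₁ • p₁, a₂ • p₂))
    (hinr : ∀ (w : W) (p₁ : P₁) (p₂ : P₂),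
      (TrivSqZeroExt.inr w : TriRing A₁ A₂ W) • ((p₁, p₂) : P₁ × P₂)
        = (φ (wmk A₂ W P₂ w p₂), 0))
    -- the `A`-module `(W ⊗_{A₂} P₂, 0, 0)`
    [Module (TriRing A₁ A₂ W) (WTensor A₂ W P₂)]
    (kinl : ∀ (a₁ : A₁) (a₂ : A₂) (x : WTensor A₂ W P₂),
      (TrivSqZeroExt.inl (a₁, a₂) : TriRing A₁ A₂ W) • x = tau A₁ A₂ W P₂ a₁ x)
    (kinr : ∀ (w : W) (x : WTensor A₂ W P₂),
      (TrivSqZeroExt.inr w : TriRing A₁ A₂ W) • x = 0)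
    -- the `A`-module `(P₁, 0, 0)`
    [Module (TriRing A₁ A₂ W) P₁]
    (pinl : ∀ (a₁ : A₁) (a₂ : A₂) (p : P₁),
      (TrivSqZeroExt.inl (a₁, a₂) : TriRing A₁ A₂ W) • p = a₁ • p)
    (pinr : ∀ (w : W) (p : P₁), (TrivSqZeroExt.inr w : TriRing A₁ A₂ W) • p = 0)
    -- the `A`-module `(W ⊗_{A₂} P₂, id, P₂)`
    [Module (TriRing A₁ A₂ W) ((WTensor A₂ W P₂) × P₂)]
    (minl : ∀ (a₁ : A₁) (a₂ : A₂) (x : WTensor A₂ W P₂) (p₂ : P₂),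
      (TrivSqZeroExt.inl (a₁, a₂) : TriRing A₁ A₂ W) • ((x, p₂) : (WTensor A₂ W P₂) × P₂)
        = (tau A₁ A₂ W P₂ a₁ x, a₂ • p₂))
    (minr : ∀ (w : W) (x : WTensor A₂ W P₂) (p₂ : P₂),
      (TrivSqZeroExt.inr w : TriRing A₁ A₂ W) • ((x, p₂) : (WTensor A₂ W P₂) × P₂)
        = (wmk A₂ W P₂ w p₂, 0)) :
    -- the resolution
    (Module.Projective (TriRing A₁ A₂ W) (WTensor A₂ W P₂)) ∧
    (Module.Projective (TriRing A₁ A₂ W) (P₁ × ((WTensor A₂ W P₂) × P₂))) ∧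
    (let f : WTensor A₂ W P₂ → P₁ × ((WTensor A₂ W P₂) × P₂) := fun x => (-(φ x), (x, 0))
     let g : P₁ × ((WTensor A₂ W P₂) × P₂) → P₁ × P₂ := fun m => (m.1 + φ m.2.1, m.2.2)
     (∀ x y, f (x + y) = f x + f y) ∧
     (∀ (a : TriRing A₁ A₂ W) (x : WTensor A₂ W P₂), f (a • x) = a • f x) ∧
     (∀ x y, g (x + y) = g x + g y) ∧
     (∀ (a : TriRing A₁ A₂ W) (m : P₁ × ((WTensor A₂ W P₂) × P₂)), g (a • m) = a • g m) ∧
     Function.Injective f ∧ Function.Surjective g ∧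
     Set.range f = {m | g m = 0}) := by
  have hK (a : TriRing A₁ A₂ W) (x : WTensor A₂ W P₂) : a • x = tau A₁ A₂ W P₂ a.fst.1 x := by
    rw [TriRing.smul_eq, kinl, kinr, add_zero]
  have hP (a : TriRing A₁ A₂ W) (p : P₁) : a • p = a.fst.1 • p := by
    rw [TriRing.smul_eq, pinl, pinr, add_zero]
  have hKP (a : TriRing A₁ A₂ W) (m : WTensor A₂ W P₂ × P₂) :
      a • m = (tau A₁ A₂ W P₂ a.fst.1 m.1 + wmk A₂ W P₂ a.snd m.2, a.fst.2 • m.2) := by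
    rw [TriRing.smul_eq, minl, minr, Prod.mk_add_mk, add_zero]
  have hM (a : TriRing A₁ A₂ W) (m : P₁ × P₂) :
      a • m = (a.fst.1 • m.1 + φ (wmk A₂ W P₂ a.snd m.2), a.fst.2 • m.2) := by
    rw [TriRing.smul_eq, hinl, hinr, Prod.mk_add_mk, add_zero]
  have := TriRing.projective_of_smul_eq_fst hP
  have := WTensor.projective_standard hKP
  refine ⟨WTensor.projective_triRing hK, inferInstance, fun x y => ?_, fun a x => ?_,
    fun m m' => ?_, fun a m => ?_, fun x y hxy => ?_, fun m => ⟨(m.1, 0, m.2), ?_⟩, ?_⟩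
  · simp [add_comm]
  · simp [hK, hφ, hP, hKP]
  · simp [add_add_add_comm]
  · simp [hφ, hP, hKP, hM, add_assoc]
  · exact congrArg (·.2.1) hxy
  · simp
  · ext m
    constructor
    · rintro ⟨y, rfl⟩
      simp
    · intro hm
      obtain ⟨hp, hq⟩ : m.1 + φ m.2.1 = 0 ∧ m.2.2 = 0 := by simpa using hm
      exact ⟨m.2.1, Prod.ext (eq_neg_of_add_eq_zero_left hp).symm (Prod.ext rfl hq.symm)⟩
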